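/- arXiv:2601.23054 — 3 statements merged into one kernel-verified Lean document; each statement's English description precedes it below -/
import Mathlib

section
/- For every f in H there exists a unique tuple of integers (n_1, …, n_s) ∈ ℤ^s such that for every x ∈ ℝ/ℤ one has f(x) − x − (n_1·α_1 + … + n_s·α_s mod 1) ∈ { p/q mod 1 : p ∈ ℤ }. -/
/-!
Each generator of `H` moves every point by a fixed element of `A`, up to an error in
`P = {p/q mod 1}`: `R_{αᵢ}` moves by `αᵢ`, and `E_τ` moves by `0`, since it translates each
interval `[i/q, (i+1)/q)` by a multiple of `1/q`. The bijections with this property form a group,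
so every `f ∈ H` is, modulo `P`, a translation by some `∑ nᵢ αᵢ`. Two such tuples `n, n'` give
`∑ (nᵢ - n'ᵢ) αᵢ ∈ ℚ`, which forces `n = n'` because `1, α₁, …, α_s` are linearly independent
over `ℚ`.
-/

open Equiv

noncomputable section

/-- The circle `ℝ/ℤ`. -/
abbrev Circ : Type := AddCircle (1 : ℝ)

/-- Rotation by `a` : the bijection `x ↦ x + a` of the circle. -/
def Rot (a : Circ) : Equiv.Perm Circ := Equiv.addRight a

/-- The subgroup `{ p/q mod 1 : p ∈ ℤ }` of the circle. -/
def RatPts (q : ℕ) : AddSubgroup Circ :=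
  AddSubgroup.zmultiples (((q : ℝ)⁻¹ : ℝ) : Circ)

/-- The group of bijections of the circle all of whose displacements lie in `RatPts q`. -/
def Delta (q : ℕ) : Subgroup (Equiv.Perm Circ) where
  carrier := {f | ∀ x : Circ, f x - x ∈ RatPts q}
  one_mem' := by intro x; simpa using zero_mem (RatPts q)
  mul_mem' := by
    intro f g hf hg x
    have h1 : f (g x) - g x ∈ RatPts q := hf (g x)
    have h2 : g x - x ∈ RatPts q := hg x
    have h3 := add_mem h1 h2
    simpa [Equiv.Perm.mul_apply, sub_add_sub_cancel] using h3
  inv_mem' := by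
    intro f hf x
    have h1 : f (f⁻¹ x) - f⁻¹ x ∈ RatPts q := hf (f⁻¹ x)
    rw [show f (f⁻¹ x) = x from Equiv.apply_symm_apply f x] at h1
    simpa using neg_mem h1

/-- The subgroup `A` of the circle generated by the classes of `α₁, …, α_s`. -/
def Agrp (s : ℕ) (α : Fin s → ℝ) : AddSubgroup Circ :=
  AddSubgroup.closure (Set.range fun i => ((α i : ℝ) : Circ))

/-- The group `H` generated by the rotations `R_{αᵢ}` and the maps `E_{τⱼ}`. -/
def Hgrp (s m q : ℕ) (α : Fin s → ℝ) (τs : Fin m → Equiv.Perm (Fin q))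
    (E : Equiv.Perm (Fin q) → Equiv.Perm Circ) : Subgroup (Equiv.Perm Circ) :=
  Subgroup.closure ((Set.range fun i => Rot ((α i : ℝ) : Circ)) ∪ (Set.range fun j => E (τs j)))

/-- The group `Q` generated by the maps `E_{τⱼ}`. -/
def Qgrp (m q : ℕ) (τs : Fin m → Equiv.Perm (Fin q))
    (E : Equiv.Perm (Fin q) → Equiv.Perm Circ) : Subgroup (Equiv.Perm Circ) :=
  Subgroup.closure (Set.range fun j => E (τs j))

/-- The subgroup `𝔖(Q)` of `S_q` generated by `τ₁, …, τ_m`. -/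
def SQgrp (m q : ℕ) (τs : Fin m → Equiv.Perm (Fin q)) : Subgroup (Equiv.Perm (Fin q)) :=
  Subgroup.closure (Set.range τs)

/-- The subgroup `W = ⟨σ, τ₁, …, τ_m⟩` of `S_q`, where `σ` is the `q`-cycle. -/
def Wgrp (m q : ℕ) (τs : Fin m → Equiv.Perm (Fin q)) : Subgroup (Equiv.Perm (Fin q)) :=
  Subgroup.closure ({finRotate q} ∪ Set.range τs)

def translationsModulo {G : Type*} [AddCommGroup G] (B P : AddSubgroup G) :
    Subgroup (Equiv.Perm G) where
  carrier := {f | ∃ b ∈ B, ∀ x, f x - x - b ∈ P}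
  one_mem' := ⟨0, B.zero_mem, fun x => by simp⟩
  mul_mem' := by
    rintro f g ⟨b, hb, hf⟩ ⟨c, hc, hg⟩
    refine ⟨b + c, B.add_mem hb hc, fun x => ?_⟩
    have key : (f * g) x - x - (b + c) = (f (g x) - g x - b) + (g x - x - c) := by
      rw [Equiv.Perm.mul_apply]; abel
    exact key ▸ P.add_mem (hf (g x)) (hg x)
  inv_mem' := by
    rintro f ⟨b, hb, hf⟩
    refine ⟨-b, B.neg_mem hb, fun x => ?_⟩
    have key : f⁻¹ x - x - -b = -(f (f⁻¹ x) - f⁻¹ x - b) := by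
      rw [show f (f⁻¹ x) = x from f.apply_symm_apply x]; abel
    exact key ▸ P.neg_mem (hf (f⁻¹ x))

section translationsModulo

variable {G : Type*} [AddCommGroup G] {B P : AddSubgroup G}

theorem addRight_mem_translationsModulo {b : G} (hb : b ∈ B) :
    Equiv.addRight b ∈ translationsModulo B P :=
  ⟨b, hb, fun x => by simp⟩

theorem mem_translationsModulo_of_forall_sub_mem {f : Equiv.Perm G} (hf : ∀ x, f x - x ∈ P) :
    f ∈ translationsModulo B P :=
  ⟨0, B.zero_mem, fun x => by simpa using hf x⟩

end translationsModulo

theorem intCast_div_mem_ratPts (q : ℕ) (k : ℤ) : (((k / q : ℝ)) : Circ) ∈ RatPts q :=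
  ⟨k, by simp only [← AddCircle.coe_zsmul, zsmul_eq_mul, div_eq_mul_inv]⟩

theorem exists_rat_eq_of_coe_mem_ratPts {q : ℕ} {x : ℝ} (hx : (x : Circ) ∈ RatPts q) :
    ∃ r : ℚ, x = r := by
  obtain ⟨k, hk⟩ := hx
  simp only [← AddCircle.coe_zsmul, QuotientAddGroup.eq, AddSubgroup.mem_zmultiples_iff] at hk
  obtain ⟨j, hj⟩ := hk
  refine ⟨j + k / q, ?_⟩
  rw [zsmul_eq_mul, zsmul_eq_mul, mul_one] at hj
  push_cast
  rw [div_eq_mul_inv]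
  linarith

theorem exists_fin_div_add_eq {q : ℕ} (hq : 0 < q) (x : Circ) :
    ∃ (i : Fin q) (t : ℝ), 0 ≤ t ∧ t < 1 / q ∧ (((i : ℕ) / q + t : ℝ) : Circ) = x := by
  induction x using QuotientAddGroup.induction_on with
  | H r =>
    have hq' : (0 : ℝ) < q := Nat.cast_pos.mpr hq
    set y := Int.fract r
    have hyq : 0 ≤ y * q := by positivity
    have hi : ⌊y * q⌋₊ < q := (Nat.floor_lt hyq).mpr <|
      mul_lt_of_lt_one_left hq' (Int.fract_lt_one r)
    refine ⟨⟨⌊y * q⌋₊, hi⟩, y - ⌊y * q⌋₊ / q, ?_, ?_, ?_⟩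
    · rw [sub_nonneg, div_le_iff₀ hq']
      exact Nat.floor_le hyq
    · rw [sub_lt_iff_lt_add, ← add_div, lt_div_iff₀ hq', add_comm]
      exact Nat.lt_floor_add_one _
    · simp [y]

theorem mem_Delta_of_permutes_blocks {q : ℕ} (hq : 0 < q) {g : Equiv.Perm Circ}
    (τ : Equiv.Perm (Fin q))
    (hg : ∀ (i : Fin q) (t : ℝ), 0 ≤ t → t < 1 / q →
      g ((((i : ℕ) : ℝ) / q + t : ℝ) : Circ) = ((((τ i : ℕ) : ℝ) / q + t : ℝ) : Circ)) :
    g ∈ Delta q := by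
  intro x
  obtain ⟨i, t, ht₀, ht₁, rfl⟩ := exists_fin_div_add_eq hq x
  rw [hg i t ht₀ ht₁, ← AddCircle.coe_sub]
  convert intCast_div_mem_ratPts q ((τ i : ℕ) - (i : ℕ) : ℤ) using 2
  push_cast; ring

theorem Hgrp_le_translationsModulo {s m q : ℕ} (α : Fin s → ℝ)
    (τs : Fin m → Equiv.Perm (Fin q)) {E : Equiv.Perm (Fin q) → Equiv.Perm Circ}
    (hE : ∀ j, E (τs j) ∈ Delta q) :
    Hgrp s m q α τs E ≤ translationsModulo (Agrp s α) (RatPts q) := by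
  refine Subgroup.closure_le _ |>.mpr ?_
  rintro _ (⟨i, rfl⟩ | ⟨j, rfl⟩)
  · exact addRight_mem_translationsModulo (AddSubgroup.subset_closure ⟨i, rfl⟩)
  · exact mem_translationsModulo_of_forall_sub_mem (hE j)

theorem LinearIndependent.eq_zero_of_sum_mul_eq_ratCast {s : ℕ} {α : Fin s → ℝ}
    (hα : LinearIndependent ℚ (Fin.cons (1 : ℝ) α)) {c : Fin s → ℚ} {r : ℚ}
    (h : ∑ i, (c i : ℝ) * α i = r) : c = 0 := by
  have hrel := Fintype.linearIndependent_iff.mp hα (Fin.cons (-r) c) <| by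
    simp [Fin.sum_univ_succ, Rat.smul_def, h]
  funext i
  simpa using hrel i.succ

theorem eq_of_sum_zsmul_sub_sum_zsmul_mem_ratPts {s q : ℕ} {α : Fin s → ℝ}
    (hα : LinearIndependent ℚ (Fin.cons (1 : ℝ) α)) {n n' : Fin s → ℤ}
    (h : ∑ i, n i • ((α i : ℝ) : Circ) - ∑ i, n' i • ((α i : ℝ) : Circ) ∈ RatPts q) :
    n = n' := by
  have hcoe : ∑ i, n i • ((α i : ℝ) : Circ) - ∑ i, n' i • ((α i : ℝ) : Circ) =
      ((∑ i, ((n i - n' i : ℤ) : ℚ) * α i : ℝ) : Circ) := by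
    rw [← Finset.sum_sub_distrib]
    refine (map_sum (QuotientAddGroup.mk' (AddSubgroup.zmultiples (1 : ℝ))) _ _ |>.trans
      (Finset.sum_congr rfl fun i _ => ?_)).symm
    rw [← sub_smul, Rat.cast_intCast, ← zsmul_eq_mul, map_zsmul]
    rfl
  obtain ⟨r, hr⟩ := exists_rat_eq_of_coe_mem_ratPts (hcoe ▸ h)
  have := hα.eq_zero_of_sum_mul_eq_ratCast hr
  funext i
  simpa [sub_eq_zero] using congrFun this i

theorem stmt_0_general
    (s m q : ℕ) (hq : 2 ≤ q)
    (α : Fin s → ℝ) (hα : LinearIndependent ℚ (Fin.cons (1 : ℝ) α))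
    (τs : Fin m → Equiv.Perm (Fin q))
    (E : Equiv.Perm (Fin q) → Equiv.Perm Circ)
    (hE : ∀ (τ : Equiv.Perm (Fin q)) (i : Fin q) (t : ℝ), 0 ≤ t → t < 1 / q →
      E τ ((((i : ℕ) : ℝ) / q + t : ℝ) : Circ) = ((((τ i : ℕ) : ℝ) / q + t : ℝ) : Circ))
    (f : Equiv.Perm Circ) (hf : f ∈ Hgrp s m q α τs E) :
    ∃! n : Fin s → ℤ, ∀ x : Circ,
      f x - x - ∑ i, n i • ((α i : ℝ) : Circ) ∈ RatPts q := by
  have hEΔ j := mem_Delta_of_permutes_blocks (by omega) (τs j) (hE (τs j))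
  obtain ⟨a, ha, hfa⟩ := Hgrp_le_translationsModulo α τs hEΔ hf
  obtain ⟨n, rfl⟩ := AddSubgroup.exists_of_mem_closure_range _ _ ha
  refine ⟨n, hfa, fun n' hn' => Eq.symm <| eq_of_sum_zsmul_sub_sum_zsmul_mem_ratPts (q := q) hα ?_⟩
  convert sub_mem (hn' 0) (hfa 0) using 1
  abel

theorem stmt_0
    (s m q : ℕ) (hs : 1 ≤ s) (hm : 1 ≤ m) (hq : 2 ≤ q)
    (α : Fin s → ℝ) (hα : LinearIndependent ℚ (Fin.cons (1 : ℝ) α))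
    (τs : Fin m → Equiv.Perm (Fin q))
    (E : Equiv.Perm (Fin q) → Equiv.Perm Circ)
    (hE : ∀ (τ : Equiv.Perm (Fin q)) (i : Fin q) (t : ℝ), 0 ≤ t → t < 1 / q →
      E τ ((((i : ℕ) : ℝ) / q + t : ℝ) : Circ) = ((((τ i : ℕ) : ℝ) / q + t : ℝ) : Circ))
    (f : Equiv.Perm Circ) (hf : f ∈ Hgrp s m q α τs E) :
    ∃! n : Fin s → ℤ, ∀ x : Circ,
      f x - x - ∑ i, n i • ((α i : ℝ) : Circ) ∈ RatPts q :=
  stmt_0_general s m q hq α hα τs E hE f hf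
end
end

section
/- Let G be a group and N a subgroup of G containing the commutator subgroup [G,G]. Then G has a solvable subgroup of finite index if and only if N has a solvable subgroup of finite index. In particular, G is virtually solvable if and only if [G,G] is virtually solvable. -/
/-!
If `N ⊇ [G, G]` has a solvable subgroup of finite index, it has a greatest normal one `T`:
the join of two normal solvable subgroups is solvable, so one of minimal index contains all
the others. Being greatest, `T` is characteristic in `N`, hence normal in `G`. In `G ⧸ T` the
image `K` of `N` is finite and contains the derived subgroup, so the centralizer `C` of `K` has
finite index, and `[C, C] ≤ K` is abelian because `C` centralizes `K`. Thus `C` is solvable,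
and so is its preimage in `G`, an extension of `C` by `T`.
-/

open Subgroup

def IsVirtuallySolvable (G : Type*) [Group G] : Prop :=
  ∃ S : Subgroup G, S.FiniteIndex ∧ Group.IsSolvable S

section

variable {G : Type*} [Group G]

theorem isSolvable_map {Q : Type*} [Group Q] (f : G →* Q) (H : Subgroup G) [Group.IsSolvable H] :
    Group.IsSolvable (H.map f) :=
  Group.isSolvable_of_surjective (f.subgroupMap_surjective H)

theorem isSolvable_comap_of_isSolvable_ker {Q : Type*} [Group Q] (f : G →* Q)
    [Group.IsSolvable f.ker] (S : Subgroup Q) [Group.IsSolvable S] :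
    Group.IsSolvable (S.comap f) :=
  Group.isSolvable_of_ker_le_range (f.ker.inclusion fun x hx ↦ by simp [f.mem_ker.mp hx])
    (f.subgroupComap S) fun x hx ↦ ⟨⟨x, congrArg Subtype.val hx⟩, rfl⟩

theorem isSolvable_sup_of_normal (U V : Subgroup G) [U.Normal] [Group.IsSolvable U]
    [Group.IsSolvable V] : Group.IsSolvable ↥(U ⊔ V) := by
  rw [sup_comm, Group.isSolvable_iff_subgroup_quotient (U.subgroupOf (V ⊔ U))]
  constructor
  · exact Group.isSolvable_of_isSolvable_injective
      (f := (subgroupOfEquivOfLe le_sup_right).toMonoidHom) (MulEquiv.injective _)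
  · exact Group.isSolvable_of_surjective
      (f := (QuotientGroup.quotientInfEquivProdNormalQuotient V U).toMonoidHom)
      (MulEquiv.surjective _)

theorem finiteIndex_centralizer_of_finite (K : Subgroup G) [K.Normal] [Finite K] :
    (centralizer (K : Set G)).FiniteIndex := by
  have : Finite (MulAut K) := Finite.of_injective _ MulEquiv.toEquiv_injective
  refine finiteIndex_of_le (H := (MulAut.conjNormal : G →* MulAut K).ker) fun g hg k hk ↦ ?_
  have hconj : g * k * g⁻¹ = k := by
    simpa using congrArg Subtype.val (DFunLike.congr_fun hg ⟨k, hk⟩)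
  exact (mul_inv_eq_iff_eq_mul.mp hconj).symm

theorem isSolvable_centralizer_of_commutator_le {K : Subgroup G} (hK : commutator G ≤ K) :
    Group.IsSolvable (centralizer (K : Set G)) := by
  set C := centralizer (K : Set G)
  rw [Group.isSolvable_iff_subgroup_quotient (commutator C)]
  refine ⟨Group.isSolvable_of_comm fun x y ↦ Subtype.ext (Subtype.ext ?_),
    inferInstanceAs (Group.IsSolvable (Abelianization C))⟩
  have hx : (x : G) ∈ K := hK <| commutator_mono le_top le_top <|
    C.map_subtype_commutator ▸ mem_map_of_mem C.subtype x.2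
  exact (y : C).2 _ hx

theorem finite_map_of_finiteIndex_subgroupOf_ker {Q : Type*} [Group Q] (f : G →* Q)
    (N : Subgroup G) [(f.ker.subgroupOf N).FiniteIndex] : Finite (N.map f) := by
  rw [← N.range_subtype, ← MonoidHom.range_comp]
  refine Nat.finite_of_card_ne_zero ?_
  rw [← index_ker, ← MonoidHom.comap_ker]
  exact ‹(f.ker.subgroupOf N).FiniteIndex›.index_ne_zero

theorem commutator_le_map_of_commutator_le {Q : Type*} [Group Q] {f : G →* Q}
    (hf : Function.Surjective f) {N : Subgroup G} (hN : commutator G ≤ N) :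
    commutator Q ≤ N.map f := by
  rw [_root_.commutator_def, ← map_top_of_surjective f hf, ← map_commutator,
    ← _root_.commutator_def]
  exact map_mono hN

namespace IsVirtuallySolvable

theorem subgroup (h : IsVirtuallySolvable G) (H : Subgroup G) : IsVirtuallySolvable H := by
  obtain ⟨S, _, _⟩ := h
  refine ⟨S.subgroupOf H, inferInstance, Group.isSolvable_of_isSolvable_injective
    (f := H.subtype.subgroupComap S) fun x y hxy ↦ ?_⟩
  exact Subtype.ext (Subtype.ext (congrArg Subtype.val hxy :))

theorem exists_normal (h : IsVirtuallySolvable G) :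
    ∃ T : Subgroup G, T.Normal ∧ T.FiniteIndex ∧ Group.IsSolvable T := by
  obtain ⟨S, _, _⟩ := h
  exact ⟨S.normalCore, S.normalCore_normal, inferInstance,
    Group.isSolvable_of_isSolvable_injective (inclusion_injective S.normalCore_le)⟩

theorem exists_greatest_normal (h : IsVirtuallySolvable G) :
    ∃ T : Subgroup G, (T.Normal ∧ T.FiniteIndex ∧ Group.IsSolvable T) ∧
      ∀ U : Subgroup G, U.Normal → U.FiniteIndex → Group.IsSolvable U → U ≤ T := by
  obtain ⟨T, ⟨hT, hTfi, hTsol⟩, hmin⟩ := (measure Subgroup.index).wf.has_min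
    {T : Subgroup G | T.Normal ∧ T.FiniteIndex ∧ Group.IsSolvable T} h.exists_normal
  refine ⟨T, ⟨hT, hTfi, hTsol⟩, fun U hU _ hUsol ↦ by_contra fun hUT ↦ ?_⟩
  exact hmin (T ⊔ U) ⟨inferInstance, finiteIndex_of_le le_sup_left,
    isSolvable_sup_of_normal T U⟩ (index_strictAnti (left_lt_sup.mpr hUT))

theorem exists_characteristic (h : IsVirtuallySolvable G) :
    ∃ T : Subgroup G, T.Characteristic ∧ T.FiniteIndex ∧ Group.IsSolvable T := by
  obtain ⟨T, ⟨hT, hTfi, hTsol⟩, hmax⟩ := h.exists_greatest_normal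
  refine ⟨T, characteristic_iff_map_le.mpr fun φ ↦ hmax _ (hT.map _ φ.surjective) ⟨?_⟩
    (isSolvable_map _ T), hTfi, hTsol⟩
  rw [index_map_of_bijective φ.bijective]
  exact hTfi.index_ne_zero

theorem of_commutator_le_finite {K : Subgroup G} [Finite K] (hK : commutator G ≤ K) :
    IsVirtuallySolvable G :=
  have := Normal.of_commutator_le _ hK
  ⟨_, finiteIndex_centralizer_of_finite K, isSolvable_centralizer_of_commutator_le hK⟩

theorem of_quotient (T : Subgroup G) [T.Normal] [Group.IsSolvable T]
    (h : IsVirtuallySolvable (G ⧸ T)) : IsVirtuallySolvable G := by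
  obtain ⟨S, _, _⟩ := h
  have : Group.IsSolvable (QuotientGroup.mk' T).ker := by rwa [QuotientGroup.ker_mk']
  refine ⟨S.comap (QuotientGroup.mk' T), ⟨?_⟩, isSolvable_comap_of_isSolvable_ker _ S⟩
  rw [index_comap_of_surjective _ (QuotientGroup.mk'_surjective T)]
  exact FiniteIndex.index_ne_zero

theorem of_commutator_le {N : Subgroup G} (hN : commutator G ≤ N)
    (h : IsVirtuallySolvable N) : IsVirtuallySolvable G := by
  have := Normal.of_commutator_le _ hN
  obtain ⟨T, _, _, _⟩ := h.exists_characteristic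
  set T' := T.map N.subtype
  have := isSolvable_map N.subtype T
  have : ((QuotientGroup.mk' T').ker.subgroupOf N).FiniteIndex := by
    rwa [QuotientGroup.ker_mk', ← comap_subtype,
      comap_map_eq_self_of_injective N.subtype_injective]
  have := finite_map_of_finiteIndex_subgroupOf_ker (QuotientGroup.mk' T') N
  exact of_quotient T' <| of_commutator_le_finite <|
    commutator_le_map_of_commutator_le (QuotientGroup.mk'_surjective T') hN

end IsVirtuallySolvable

theorem isVirtuallySolvable_iff_of_commutator_le {N : Subgroup G} (hN : commutator G ≤ N) :
    IsVirtuallySolvable G ↔ IsVirtuallySolvable N :=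
  ⟨fun h ↦ h.subgroup N, .of_commutator_le hN⟩

end

theorem stmt_3 {G : Type*} [Group G] (N : Subgroup G) (hN : commutator G ≤ N) :
    ((∃ S : Subgroup G, S.FiniteIndex ∧ IsSolvable ↥S) ↔
      (∃ S : Subgroup ↥N, S.FiniteIndex ∧ IsSolvable ↥S)) ∧
    ((∃ S : Subgroup G, S.FiniteIndex ∧ IsSolvable ↥S) ↔
      (∃ S : Subgroup ↥(commutator G), S.FiniteIndex ∧ IsSolvable ↥S)) :=
  ⟨isVirtuallySolvable_iff_of_commutator_le hN, isVirtuallySolvable_iff_of_commutator_le le_rfl⟩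
end

section
/- The torsion elements of H form a normal subgroup T(H), which equals K; the quotient group H/T(H) is isomorphic to A, hence is free abelian of rank s; and H splits as an internal semidirect product of K by the rotation subgroup: denoting by R_A the subgroup of H generated by the rotations R_{α_1},…,R_{α_s}, one has K ∩ R_A = {id} and K·R_A = H, so H ≅ K ⋊ A. -/
open Equiv

noncomputable section

/-!
Each generator of `H` moves every point of the circle by one and the same element of `A`, up
to the finite group `P = (1/q)ℤ/ℤ` (the maps `E_τ` by `0`), and this property is stable under
products and inverses. As `1, α₁, …, α_s` are independent over `ℚ`, `A ∩ P = 0`, so that element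
`φ f ∈ A` is unique and `φ` is a homomorphism `H → A`, split by `a ↦ R_a`, with kernel `K`.
An element of `K` permutes each finite coset `x + P`, hence has finite order, while `A ≅ ℤˢ` is
torsion-free.
-/

section AlmostTranslations

variable {G : Type*} [AddCommGroup G]

def almostTranslations (A P : AddSubgroup G) : Subgroup (Perm G) where
  carrier := {f | ∃ a ∈ A, ∀ x, f x - x - a ∈ P}
  one_mem' := ⟨0, A.zero_mem, fun x => by simp⟩
  mul_mem' := by
    rintro f g ⟨a, ha, hfa⟩ ⟨b, hb, hgb⟩
    refine ⟨a + b, add_mem ha hb, fun x => ?_⟩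
    convert add_mem (hfa (g x)) (hgb x) using 1
    simp only [Perm.mul_apply]
    abel
  inv_mem' := by
    rintro f ⟨a, ha, hfa⟩
    refine ⟨-a, neg_mem ha, fun x => ?_⟩
    convert neg_mem (hfa (f⁻¹ x)) using 1
    simp only [Perm.coe_inv, apply_symm_apply]
    abel

variable {A P : AddSubgroup G}

theorem addRight_mem_almostTranslations {a : G} (ha : a ∈ A) :
    Equiv.addRight a ∈ almostTranslations A P :=
  ⟨a, ha, fun x => by simp⟩

theorem eq_of_sub_mem_of_sub_mem (hAP : Disjoint A P) {a b y : G} (ha : a ∈ A) (hb : b ∈ A)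
    (hya : y - a ∈ P) (hyb : y - b ∈ P) : a = b := by
  rw [← sub_eq_zero, ← AddSubgroup.mem_bot, ← hAP.eq_bot]
  exact AddSubgroup.mem_inf.2 ⟨sub_mem ha hb, by simpa using sub_mem hyb hya⟩

/-- A chosen witness; by `translationPart_eq_iff` it is the only one when `Disjoint A P`. -/
def translationPart (f : almostTranslations A P) : A :=
  ⟨f.2.choose, f.2.choose_spec.1⟩

theorem translationPart_spec (f : almostTranslations A P) (x : G) :
    f.1 x - x - translationPart f ∈ P :=
  f.2.choose_spec.2 x

theorem translationPart_eq_iff (hAP : Disjoint A P) {f : almostTranslations A P} {a : A} :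
    translationPart f = a ↔ ∀ x, f.1 x - x - a ∈ P := by
  refine ⟨fun h => h ▸ translationPart_spec f, fun h => Subtype.ext ?_⟩
  exact eq_of_sub_mem_of_sub_mem hAP (translationPart f).2 a.2 (translationPart_spec f 0) (h 0)

def translationHom (hAP : Disjoint A P) : almostTranslations A P →* Multiplicative A where
  toFun f := .ofAdd (translationPart f)
  map_one' := by
    simp only [ofAdd_eq_one, translationPart_eq_iff hAP]
    simp
  map_mul' f g := by
    rw [← ofAdd_add, (translationPart_eq_iff hAP).2]
    intro x
    convert add_mem (translationPart_spec f (g.1 x)) (translationPart_spec g x) using 1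
    simp only [Subgroup.coe_mul, Perm.mul_apply, AddSubgroup.coe_add]
    abel

theorem translationHom_apply_eq_one_iff (hAP : Disjoint A P) {f : almostTranslations A P} :
    translationHom hAP f = 1 ↔ ∀ x, f.1 x - x ∈ P := by
  simp [translationHom, translationPart_eq_iff hAP]

theorem translationHom_addRight (hAP : Disjoint A P) (a : A) :
    translationHom hAP ⟨Equiv.addRight a, addRight_mem_almostTranslations a.2⟩ = .ofAdd a := by
  simp [translationHom, translationPart_eq_iff hAP]

theorem pow_factorial_card_eq_one [Finite P] {f : Perm G} (hf : ∀ x, f x - x ∈ P) :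
    f ^ (Nat.card P).factorial = 1 := by
  ext x
  have hfS : ∀ y, f y - x ∈ P ↔ y - x ∈ P := fun y => by
    rw [← sub_add_sub_cancel (f y) y x]
    exact P.add_mem_cancel_left (hf y)
  let e : {y // y - x ∈ P} ≃ P := (Equiv.subRight x).subtypeEquiv fun _ => Iff.rfl
  have : Finite {y // y - x ∈ P} := .of_equiv _ e.symm
  have h := pow_card_eq_one' (x := f.subtypePerm (p := fun y => y - x ∈ P) hfS)
  rw [Nat.card_perm, Nat.card_congr e, Perm.subtypePerm_pow] at h
  exact congrArg (fun g => (g ⟨x, by simp⟩).1) h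

theorem isOfFinOrder_iff_translationHom_eq_one (hAP : Disjoint A P) [Finite P]
    [IsAddTorsionFree A] (f : almostTranslations A P) :
    IsOfFinOrder f.1 ↔ translationHom hAP f = 1 := by
  refine ⟨fun hf => ?_, fun hf => ?_⟩
  · exact (MonoidHom.isOfFinOrder _ (Submonoid.isOfFinOrder_coe.1 hf)).eq_one'
  rw [translationHom_apply_eq_one_iff] at hf
  exact isOfFinOrder_iff_pow_eq_one.2
    ⟨_, Nat.factorial_pos _, pow_factorial_card_eq_one hf⟩

end AlmostTranslations

theorem coe_sum_zsmul {s : ℕ} (α : Fin s → ℝ) (c : Fin s → ℤ) :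
    ∑ i, c i • (α i : Circ) = ((∑ i, c i • α i : ℝ) : Circ) :=
  (map_sum (QuotientAddGroup.mk' (AddSubgroup.zmultiples (1 : ℝ))) _ _).symm.trans (by simp)

theorem eq_zero_of_sum_zsmul_eq_ratCast {s : ℕ} {α : Fin s → ℝ}
    (hα : LinearIndependent ℚ (Fin.cons (1 : ℝ) α)) {c : Fin s → ℤ} {r : ℚ}
    (h : ∑ i, c i • (α i : Circ) = ((r : ℝ) : Circ)) : c = 0 := by
  rw [coe_sum_zsmul, ← sub_eq_zero, ← QuotientAddGroup.mk_sub, AddCircle.coe_eq_zero_iff] at h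
  obtain ⟨n, hn⟩ := h
  have := Fintype.linearIndependent_iff.1 hα (Fin.cons (-(r + n)) fun i => (c i : ℚ)) (by
    simp only [Fin.sum_univ_succ, Fin.cons_zero, Fin.cons_succ, Rat.smul_def]
    push_cast at hn ⊢
    simp only [zsmul_eq_mul, mul_one] at hn
    linarith)
  funext i
  simpa using this i.succ

section Agrp

variable {s : ℕ} {α : Fin s → ℝ}

theorem mem_agrp_iff {a : Circ} :
    a ∈ Agrp s α ↔ ∃ c : Fin s → ℤ, ∑ i, c i • (α i : Circ) = a := by
  rw [Agrp, ← Submodule.span_int_eq_addSubgroupClosure, Submodule.mem_toAddSubgroup,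
    Submodule.mem_span_range_iff_exists_fun]

theorem linearIndependent_int_coe (hα : LinearIndependent ℚ (Fin.cons (1 : ℝ) α)) :
    LinearIndependent ℤ fun i => (α i : Circ) :=
  Fintype.linearIndependent_iff.2 fun c hc =>
    congrFun (eq_zero_of_sum_zsmul_eq_ratCast (r := 0) hα (by simpa using hc))

theorem nonempty_agrp_addEquiv (hα : LinearIndependent ℚ (Fin.cons (1 : ℝ) α)) :
    Nonempty (Agrp s α ≃+ (Fin s → ℤ)) :=
  ⟨(AddEquiv.addSubgroupCongr (Submodule.span_int_eq_addSubgroupClosure _).symm).trans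
    (Module.Basis.span (linearIndependent_int_coe hα)).equivFun.toAddEquiv⟩

theorem isAddTorsionFree_agrp (hα : LinearIndependent ℚ (Fin.cons (1 : ℝ) α)) :
    IsAddTorsionFree (Agrp s α) :=
  let e := (nonempty_agrp_addEquiv hα).some
  Function.Injective.isAddTorsionFree e.toAddMonoidHom e.injective

theorem disjoint_agrp_ratPts (hα : LinearIndependent ℚ (Fin.cons (1 : ℝ) α)) (q : ℕ) :
    Disjoint (Agrp s α) (RatPts q) := by
  rw [AddSubgroup.disjoint_def]
  intro a ha haP
  obtain ⟨n, rfl⟩ := AddSubgroup.mem_zmultiples_iff.1 haP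
  obtain ⟨c, hc⟩ := mem_agrp_iff.1 ha
  have hr : n • (((q : ℝ)⁻¹ : ℝ) : Circ) = (((n / q : ℚ) : ℝ) : Circ) := by
    rw [← QuotientAddGroup.mk_zsmul]
    push_cast
    rw [zsmul_eq_mul, div_eq_mul_inv]
  rw [← hc, eq_zero_of_sum_zsmul_eq_ratCast hα (hc.trans hr)]
  simp

end Agrp

section RatPts

variable {q : ℕ}

theorem finite_ratPts (hq : 0 < q) : Finite (RatPts q) := by
  refine (IsOfFinAddOrder.finite_zmultiples ?_).to_subtype
  refine isOfFinAddOrder_iff_nsmul_eq_zero.2 ⟨q, hq, ?_⟩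
  rw [← QuotientAddGroup.mk_nsmul, nsmul_eq_mul, mul_inv_cancel₀ (by positivity)]
  exact AddCircle.coe_period (p := (1 : ℝ))

theorem coe_intCast_div_mem_ratPts (n : ℤ) : (((n : ℝ) / q : ℝ) : Circ) ∈ RatPts q :=
  AddSubgroup.mem_zmultiples_iff.2
    ⟨n, by rw [← QuotientAddGroup.mk_zsmul, zsmul_eq_mul, div_eq_mul_inv]⟩

theorem exists_coe_div_add_eq (hq : 0 < q) (x : Circ) :
    ∃ (i : Fin q) (t : ℝ), 0 ≤ t ∧ t < 1 / q ∧ ((((i : ℕ) : ℝ) / q + t : ℝ) : Circ) = x := by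
  obtain ⟨y, rfl⟩ := QuotientAddGroup.mk_surjective x
  have hq' : (0 : ℝ) < q := by exact_mod_cast hq
  set b := Int.fract y
  have hb : b * q < q := by nlinarith [Int.fract_lt_one y]
  have hb0 : 0 ≤ b * q := by positivity
  refine ⟨⟨⌊b * q⌋₊, (Nat.floor_lt hb0).2 hb⟩, b - ⌊b * q⌋₊ / q, ?_, ?_, ?_⟩
  · rw [sub_nonneg, div_le_iff₀ hq']
    exact Nat.floor_le hb0
  · rw [sub_lt_iff_lt_add, ← add_div, lt_div_iff₀ hq', add_comm]
    exact Nat.lt_floor_add_one _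
  · simp [b]

theorem apply_sub_mem_ratPts (hq : 0 < q) {e : Perm Circ} {τ : Perm (Fin q)}
    (he : ∀ (i : Fin q) (t : ℝ), 0 ≤ t → t < 1 / q →
      e ((((i : ℕ) : ℝ) / q + t : ℝ) : Circ) = ((((τ i : ℕ) : ℝ) / q + t : ℝ) : Circ))
    (x : Circ) : e x - x ∈ RatPts q := by
  obtain ⟨i, t, ht0, ht1, rfl⟩ := exists_coe_div_add_eq hq x
  rw [he i t ht0 ht1, ← QuotientAddGroup.mk_sub]
  convert coe_intCast_div_mem_ratPts (q := q) ((τ i : ℤ) - i) using 2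
  push_cast
  ring

end RatPts

theorem hgrp_le_almostTranslations {s m q : ℕ} (hq : 0 < q) (α : Fin s → ℝ)
    (τs : Fin m → Perm (Fin q)) {E : Perm (Fin q) → Perm Circ}
    (hE : ∀ (τ : Perm (Fin q)) (i : Fin q) (t : ℝ), 0 ≤ t → t < 1 / q →
      E τ ((((i : ℕ) : ℝ) / q + t : ℝ) : Circ) = ((((τ i : ℕ) : ℝ) / q + t : ℝ) : Circ)) :
    Hgrp s m q α τs E ≤ almostTranslations (Agrp s α) (RatPts q) := by
  rw [Hgrp, Subgroup.closure_le]
  rintro f (⟨i, rfl⟩ | ⟨j, rfl⟩)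
  · exact addRight_mem_almostTranslations (AddSubgroup.subset_closure ⟨i, rfl⟩)
  · exact ⟨0, zero_mem _, fun x => by simpa using apply_sub_mem_ratPts hq (hE (τs j)) x⟩

theorem rot_zero : Rot 0 = 1 := Equiv.addRight_zero

theorem rot_add (a b : Circ) : Rot (a + b) = Rot a * Rot b := by
  ext x
  simp [Rot, add_comm a b, add_assoc]

theorem rot_neg (a : Circ) : Rot (-a) = (Rot a)⁻¹ := by
  rw [eq_inv_iff_mul_eq_one, ← rot_add, neg_add_cancel, rot_zero]

theorem mem_closure_range_rot_iff {ι : Type*} {v : ι → Circ} {f : Perm Circ} :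
    f ∈ Subgroup.closure (Set.range fun i => Rot (v i)) ↔
      ∃ a ∈ AddSubgroup.closure (Set.range v), Rot a = f := by
  constructor
  · intro hf
    induction hf using Subgroup.closure_induction with
    | mem f hf =>
      obtain ⟨i, rfl⟩ := hf
      exact ⟨v i, AddSubgroup.subset_closure ⟨i, rfl⟩, rfl⟩
    | one => exact ⟨0, zero_mem _, rot_zero⟩
    | mul f g _ _ hf hg =>
      obtain ⟨a, ha, rfl⟩ := hf
      obtain ⟨b, hb, rfl⟩ := hg
      exact ⟨a + b, add_mem ha hb, rot_add a b⟩
    | inv f _ hf =>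
      obtain ⟨a, ha, rfl⟩ := hf
      exact ⟨-a, neg_mem ha, rot_neg a⟩
  · rintro ⟨a, ha, rfl⟩
    induction ha using AddSubgroup.closure_induction with
    | mem a ha =>
      obtain ⟨i, rfl⟩ := ha
      exact Subgroup.subset_closure ⟨i, rfl⟩
    | zero => exact rot_zero ▸ one_mem _
    | add a b _ _ ha hb => exact rot_add a b ▸ mul_mem ha hb
    | neg a _ ha => exact rot_neg a ▸ inv_mem ha

theorem closure_rot_le_hgrp (s m q : ℕ) (α : Fin s → ℝ) (τs : Fin m → Perm (Fin q))
    (E : Perm (Fin q) → Perm Circ) :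
    Subgroup.closure (Set.range fun i => Rot (α i : Circ)) ≤ Hgrp s m q α τs E :=
  Subgroup.closure_mono Set.subset_union_left

theorem stmt_15_general
    (s m q : ℕ) (hq : 2 ≤ q)
    (α : Fin s → ℝ) (hα : LinearIndependent ℚ (Fin.cons (1 : ℝ) α))
    (τs : Fin m → Equiv.Perm (Fin q))
    (E : Equiv.Perm (Fin q) → Equiv.Perm Circ)
    (hE : ∀ (τ : Equiv.Perm (Fin q)) (i : Fin q) (t : ℝ), 0 ≤ t → t < 1 / q →
      E τ ((((i : ℕ) : ℝ) / q + t : ℝ) : Circ) = ((((τ i : ℕ) : ℝ) / q + t : ℝ) : Circ))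
    (H K RA : Subgroup (Equiv.Perm Circ)) (hH : H = Hgrp s m q α τs E) (hK : K = H ⊓ Delta q)
    (hRA : RA = Subgroup.closure (Set.range fun i => Rot ((α i : ℝ) : Circ))) :
    (∀ f : ↥H, IsOfFinOrder f ↔ ↑f ∈ K) ∧
    (K.subgroupOf H).Normal ∧
    (∃ φ : ↥H → Circ, (∀ f g : ↥H, φ (f * g) = φ f + φ g) ∧
      (∀ f : ↥H, φ f = 0 ↔ ↑f ∈ K) ∧ Set.range φ = (Agrp s α : Set Circ)) ∧
    Nonempty (↥(Agrp s α) ≃+ (Fin s → ℤ)) ∧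
    K ⊓ RA = ⊥ ∧
    (∀ f ∈ H, ∃ k ∈ K, ∃ r ∈ RA, f = k * r) := by
  have hq0 : 0 < q := by omega
  have := finite_ratPts hq0
  have := isAddTorsionFree_agrp hα
  have hAP := disjoint_agrp_ratPts hα q
  have hle : H ≤ almostTranslations (Agrp s α) (RatPts q) :=
    hH ▸ hgrp_le_almostTranslations hq0 α τs hE
  set ψ := (translationHom hAP).comp (Subgroup.inclusion hle)
  have hψ (f : H) : ψ f = 1 ↔ ↑f ∈ K := by
    simp [ψ, hK, translationHom_apply_eq_one_iff, f.2, Delta]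
  have hψRot (a : Agrp s α) (h : Rot a ∈ H) : ψ ⟨Rot a, h⟩ = .ofAdd a :=
    translationHom_addRight hAP a
  have hRAH : RA ≤ H := hRA ▸ hH ▸ closure_rot_le_hgrp s m q α τs E
  have hRA_iff (f : Perm Circ) : f ∈ RA ↔ ∃ a ∈ Agrp s α, Rot a = f :=
    hRA ▸ mem_closure_range_rot_iff
  refine ⟨fun f => ?_, ?_, ⟨fun f => (ψ f).toAdd, fun f g => by simp, fun f => ?_, ?_⟩,
    nonempty_agrp_addEquiv hα, ?_, fun f hf => ?_⟩
  · exact Submonoid.isOfFinOrder_coe.symm.trans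
      ((isOfFinOrder_iff_translationHom_eq_one hAP ⟨f, hle f.2⟩).trans (hψ f))
  · have hker : K.subgroupOf H = ψ.ker := by
      ext f
      rw [Subgroup.mem_subgroupOf, MonoidHom.mem_ker, hψ]
    exact hker ▸ ψ.normal_ker
  · simp [← hψ f]
  · refine Set.ext fun a => ⟨?_, fun ha => ?_⟩
    · rintro ⟨f, rfl⟩
      exact (ψ f).toAdd.2
    · exact ⟨⟨Rot a, hRAH ((hRA_iff _).2 ⟨a, ha, rfl⟩)⟩, by simp [hψRot ⟨a, ha⟩]⟩
  · refine eq_bot_iff.2 fun f ⟨hfK, hfRA⟩ => ?_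
    obtain ⟨a, ha, rfl⟩ := (hRA_iff f).1 hfRA
    have := (hψ ⟨Rot a, hRAH hfRA⟩).2 hfK
    rw [hψRot ⟨a, ha⟩, ofAdd_eq_one, AddSubgroup.mk_eq_zero] at this
    rw [this, rot_zero]
    exact one_mem _
  · set a := (ψ ⟨f, hf⟩).toAdd
    have hr : Rot a ∈ RA := (hRA_iff _).2 ⟨a, a.2, rfl⟩
    have hk := (hψ (⟨f, hf⟩ * ⟨Rot a, hRAH hr⟩⁻¹)).1 (by simp [hψRot, a])
    exact ⟨_, hk, Rot a, hr, (inv_mul_cancel_right f _).symm⟩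

theorem stmt_15
    (s m q : ℕ) (hs : 1 ≤ s) (hm : 1 ≤ m) (hq : 2 ≤ q)
    (α : Fin s → ℝ) (hα : LinearIndependent ℚ (Fin.cons (1 : ℝ) α))
    (τs : Fin m → Equiv.Perm (Fin q))
    (E : Equiv.Perm (Fin q) → Equiv.Perm Circ)
    (hE : ∀ (τ : Equiv.Perm (Fin q)) (i : Fin q) (t : ℝ), 0 ≤ t → t < 1 / q →
      E τ ((((i : ℕ) : ℝ) / q + t : ℝ) : Circ) = ((((τ i : ℕ) : ℝ) / q + t : ℝ) : Circ))
    (H K RA : Subgroup (Equiv.Perm Circ)) (hH : H = Hgrp s m q α τs E) (hK : K = H ⊓ Delta q)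
    (hRA : RA = Subgroup.closure (Set.range fun i => Rot ((α i : ℝ) : Circ))) :
    (∀ f : ↥H, IsOfFinOrder f ↔ ↑f ∈ K) ∧
    (K.subgroupOf H).Normal ∧
    (∃ φ : ↥H → Circ, (∀ f g : ↥H, φ (f * g) = φ f + φ g) ∧
      (∀ f : ↥H, φ f = 0 ↔ ↑f ∈ K) ∧ Set.range φ = (Agrp s α : Set Circ)) ∧
    Nonempty (↥(Agrp s α) ≃+ (Fin s → ℤ)) ∧
    K ⊓ RA = ⊥ ∧
    (∀ f ∈ H, ∃ k ∈ K, ∃ r ∈ RA, f = k * r) :=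
  stmt_15_general s m q hq α hα τs E hE H K RA hH hK hRA
end
end
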